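/- arXiv:1201.0420 — 2 statements merged into one kernel-verified Lean document; each statement's English description precedes it below -/
import Mathlib

section
/- For all natural numbers n ≥ 1, the sum over k from 1 to n of C(n,k)²·k·H_k·H_{n-k} equals (n/2)·C(2n, n)·[(H^{(2)}_n - H^{(2)}_{2n-1}) + (2H_n - H_{2n-1})·(2H_n - H_{2n-1} - 1/n)]. -/
open Finset BigOperators

def H (n : ℕ) : ℚ := ∑ i ∈ Finset.range n, 1 / (i + 1 : ℚ)

def H2 (n : ℕ) : ℚ := ∑ i ∈ Finset.range n, 1 / ((i + 1 : ℚ))^2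

open Polynomial

lemma H_succ (m : ℕ) : H (m + 1) = H m + 1 / ((m : ℚ) + 1) := by
  simp [H, Finset.sum_range_succ]

lemma H2_succ (m : ℕ) : H2 (m + 1) = H2 m + 1 / ((m : ℚ) + 1) ^ 2 := by
  simp [H2, Finset.sum_range_succ]

lemma evalP (N k : ℕ) :
    (descPochhammer ℚ k).eval (N : ℚ) = (N.descFactorial k : ℚ) :=
  descPochhammer_eval_eq_descFactorial ℚ N k

lemma evalP' (N : ℕ) : ∀ k, k ≤ N →
    ((descPochhammer ℚ k).derivative).eval (N : ℚ)
      = (N.descFactorial k : ℚ) * (H N - H (N - k)) := by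
  intro k
  induction k with
  | zero => simp [descPochhammer_zero]
  | succ k ih =>
    intro hk1
    have hk : k ≤ N := by omega
    have hq : ((N : ℚ) - k) ≠ 0 := by
      have : (k : ℚ) < N := by exact_mod_cast (by omega : k < N)
      intro h; linarith [sub_eq_zero.mp h]
    have hcast : ((N - k : ℕ) : ℚ) = (N : ℚ) - k := by
      push_cast [Nat.cast_sub hk]; ring
    have hH : H (N - k) = H (N - (k + 1)) + 1 / ((N : ℚ) - k) := by
      have h1 : N - k = (N - (k + 1)) + 1 := by omega
      rw [h1, H_succ]
      congr 1
      rw [div_eq_div_iff (by positivity) hq]  -- denominators equal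
      have : ((N - (k+1) : ℕ) : ℚ) = (N : ℚ) - (k + 1) := by
        push_cast [Nat.cast_sub hk1]; ring
      rw [this]; ring
    have hdf : ((N.descFactorial (k + 1) : ℕ) : ℚ)
        = ((N : ℚ) - k) * (N.descFactorial k : ℚ) := by
      rw [Nat.descFactorial_succ]; push_cast [Nat.cast_sub hk]; ring
    rw [descPochhammer_succ_right, derivative_mul]
    simp only [derivative_sub, derivative_X, derivative_natCast, sub_zero, eval_add, eval_mul,
      eval_sub, eval_X, eval_natCast, eval_one, mul_one]
    rw [ih hk, evalP, hdf, hH]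
    field_simp
    ring

lemma evalP'' (N : ℕ) : ∀ k, k ≤ N →
    ((descPochhammer ℚ k).derivative.derivative).eval (N : ℚ)
      = (N.descFactorial k : ℚ) *
          ((H N - H (N - k)) ^ 2 - (H2 N - H2 (N - k))) := by
  intro k
  induction k with
  | zero => simp [descPochhammer_zero]
  | succ k ih =>
    intro hk1
    have hk : k ≤ N := by omega
    have hq : ((N : ℚ) - k) ≠ 0 := by
      have : (k : ℚ) < N := by exact_mod_cast (by omega : k < N)
      intro h; linarith [sub_eq_zero.mp h]
    have hcast1 : ((N - (k+1) : ℕ) : ℚ) = (N : ℚ) - (k + 1) := by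
      push_cast [Nat.cast_sub hk1]; ring
    have hH : H (N - k) = H (N - (k + 1)) + 1 / ((N : ℚ) - k) := by
      have h1 : N - k = (N - (k + 1)) + 1 := by omega
      rw [h1, H_succ, hcast1]
      have : ((N:ℚ) - (k + 1) + 1) = (N:ℚ) - k := by ring
      rw [this]
    have hH2 : H2 (N - k) = H2 (N - (k + 1)) + (1 / ((N : ℚ) - k)) ^ 2 := by
      have h1 : N - k = (N - (k + 1)) + 1 := by omega
      rw [h1, H2_succ, hcast1]
      have : ((N:ℚ) - (k + 1) + 1) = (N:ℚ) - k := by ring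
      rw [this, div_pow, one_pow]
    have hdf : ((N.descFactorial (k + 1) : ℕ) : ℚ)
        = ((N : ℚ) - k) * (N.descFactorial k : ℚ) := by
      rw [Nat.descFactorial_succ]; push_cast [Nat.cast_sub hk]; ring
    rw [descPochhammer_succ_right, derivative_mul, derivative_add, derivative_mul]
    simp only [derivative_sub, derivative_X, derivative_natCast, sub_zero, eval_add, eval_mul,
      eval_sub, eval_X, eval_natCast, eval_one, mul_one, derivative_one, zero_mul, add_zero]
    rw [ih hk, evalP' N k hk, hdf, hH, hH2]
    field_simp
    ring

-- ℕ-level Vandermonde for descending factorials, cast in ℚ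
lemma natVdm (x m n : ℕ) :
    (((x + m).descFactorial n : ℕ) : ℚ)
      = ∑ k ∈ Finset.range (n + 1),
          (n.choose k : ℚ) * (x.descFactorial k : ℚ) * (m.descFactorial (n - k) : ℚ) := by
  rw [Nat.descFactorial_eq_factorial_mul_choose, Nat.add_choose_eq,
    Finset.Nat.sum_antidiagonal_eq_sum_range_succ_mk]
  push_cast
  rw [Finset.mul_sum]
  refine Finset.sum_congr rfl fun k hk => ?_
  have hk' : k ≤ n := by simpa using Finset.mem_range_succ_iff.mp hk
  rw [Nat.descFactorial_eq_factorial_mul_choose, Nat.descFactorial_eq_factorial_mul_choose]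
  have h := Nat.choose_mul_factorial_mul_factorial hk'
  have h' : ((n.choose k : ℚ)) * (k.factorial : ℚ) * ((n - k).factorial : ℚ)
      = (n.factorial : ℚ) := by exact_mod_cast congrArg (Nat.cast : ℕ → ℚ) h
  push_cast
  rw [← h']; ring

lemma nat_cast_set_infinite (S : Set ℚ) (h : ∀ m : ℕ, ((m : ℚ)) ∈ S) : S.Infinite :=
  Set.infinite_of_injective_forall_mem Nat.cast_injective h

lemma poly1 (n m : ℕ) :
    (descPochhammer ℚ n).comp (X + C (m : ℚ))
      = ∑ k ∈ Finset.range (n + 1),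
          C ((n.choose k : ℚ) * (m.descFactorial (n - k) : ℚ)) * descPochhammer ℚ k := by
  apply eq_of_infinite_eval_eq
  apply nat_cast_set_infinite
  intro x
  show eval _ _ = eval _ _
  rw [eval_comp]
  simp only [eval_add, eval_X, eval_C, eval_finset_sum, eval_mul]
  have : ((x : ℚ) + m) = (((x + m : ℕ) : ℚ)) := by push_cast; ring
  rw [this, descPochhammer_eval_eq_descFactorial, natVdm]
  refine Finset.sum_congr rfl fun k _ => ?_
  rw [descPochhammer_eval_eq_descFactorial]
  ring

lemma key0 (n m : ℕ) :
    (descPochhammer ℚ n).derivative.eval ((n : ℚ) + m)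
      = ∑ k ∈ Finset.range (n + 1),
          (n.choose k : ℚ) * (m.descFactorial (n - k) : ℚ)
            * ((descPochhammer ℚ k).derivative.eval (n : ℚ)) := by
  have h := congrArg Polynomial.derivative (poly1 n m)
  rw [derivative_comp, derivative_sum] at h
  simp only [derivative_add, derivative_X, derivative_C, add_zero, one_mul,
    derivative_C_mul] at h
  have h2 := congrArg (Polynomial.eval ((n : ℚ))) h
  rw [eval_comp] at h2
  simp only [eval_add, eval_X, eval_C, eval_finset_sum, eval_mul] at h2
  exact h2

lemma poly2 (n : ℕ) :
    ((descPochhammer ℚ n).derivative).comp (X + C (n : ℚ))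
      = ∑ k ∈ Finset.range (n + 1),
          C ((n.choose k : ℚ) * ((descPochhammer ℚ k).derivative.eval (n : ℚ)))
            * descPochhammer ℚ (n - k) := by
  apply eq_of_infinite_eval_eq
  apply nat_cast_set_infinite
  intro m
  show eval _ _ = eval _ _
  rw [eval_comp]
  simp only [eval_add, eval_X, eval_C, eval_finset_sum, eval_mul]
  have : ((m : ℚ) + n) = ((n : ℚ) + m) := by ring
  rw [this, key0]
  refine Finset.sum_congr rfl fun k _ => ?_
  rw [descPochhammer_eval_eq_descFactorial]
  ring

lemma key2 (n : ℕ) :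
    (descPochhammer ℚ n).derivative.eval (((2 * n : ℕ) : ℚ))
      = ∑ k ∈ Finset.range (n + 1),
          (n.choose k : ℚ) * (n.descFactorial (n - k) : ℚ)
            * ((descPochhammer ℚ k).derivative.eval (n : ℚ)) := by
  have := key0 n n
  have h : ((n : ℚ) + n) = ((2 * n : ℕ) : ℚ) := by push_cast; ring
  rwa [h] at this

lemma key3 (n : ℕ) :
    (descPochhammer ℚ n).derivative.derivative.eval (((2 * n : ℕ) : ℚ))
      = ∑ k ∈ Finset.range (n + 1),
          (n.choose k : ℚ) * ((descPochhammer ℚ k).derivative.eval (n : ℚ))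
            * ((descPochhammer ℚ (n - k)).derivative.eval (n : ℚ)) := by
  have h := congrArg Polynomial.derivative (poly2 n)
  rw [derivative_comp, derivative_sum] at h
  simp only [derivative_add, derivative_X, derivative_C, add_zero, one_mul,
    derivative_C_mul] at h
  have h2 := congrArg (Polynomial.eval ((n : ℚ))) h
  rw [eval_comp] at h2
  simp only [eval_add, eval_X, eval_C, eval_finset_sum, eval_mul] at h2
  have hc : ((n : ℚ) + n) = ((2 * n : ℕ) : ℚ) := by push_cast; ring
  rwa [hc] at h2

-- casting helpers
lemma df_choose (n k : ℕ) :
    (n.descFactorial k : ℚ) = (k.factorial : ℚ) * (n.choose k : ℚ) := by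
  exact_mod_cast congrArg (Nat.cast : ℕ → ℚ)
    (Nat.descFactorial_eq_factorial_mul_choose n k)

lemma df_choose' (n k : ℕ) (hk : k ≤ n) :
    (n.descFactorial (n - k) : ℚ) = ((n - k).factorial : ℚ) * (n.choose k : ℚ) := by
  rw [df_choose]
  rw [Nat.choose_symm hk]

lemma cff (n k : ℕ) (hk : k ≤ n) :
    (n.choose k : ℚ) * (k.factorial : ℚ) * ((n - k).factorial : ℚ)
      = (n.factorial : ℚ) := by
  exact_mod_cast congrArg (Nat.cast : ℕ → ℚ)
    (Nat.choose_mul_factorial_mul_factorial hk)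

lemma fact_ne (n : ℕ) : (n.factorial : ℚ) ≠ 0 := by
  exact_mod_cast n.factorial_ne_zero

lemma SC (n : ℕ) :
    ∑ k ∈ Finset.range (n + 1), (n.choose k : ℚ) ^ 2
      = (((2 * n).choose n : ℕ) : ℚ) := by
  apply mul_left_cancel₀ (fact_ne n)
  have h := natVdm n n n
  have h2n : n + n = 2 * n := by ring
  rw [h2n] at h
  rw [Nat.descFactorial_eq_factorial_mul_choose] at h
  push_cast at h ⊢
  rw [h, Finset.mul_sum]
  refine Finset.sum_congr rfl fun k hk => ?_
  have hk' : k ≤ n := Finset.mem_range_succ_iff.mp hk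
  rw [df_choose, df_choose' n k hk', ← cff n k hk']
  ring

lemma SB (n : ℕ) :
    ∑ k ∈ Finset.range (n + 1), (n.choose k : ℚ) ^ 2 * (H n - H (n - k))
      = (((2 * n).choose n : ℕ) : ℚ) * (H (2 * n) - H n) := by
  apply mul_left_cancel₀ (fact_ne n)
  have h := key2 n
  rw [evalP' (2 * n) n (by omega)] at h
  have hs : 2 * n - n = n := by omega
  rw [hs, Nat.descFactorial_eq_factorial_mul_choose] at h
  push_cast at h
  rw [Finset.mul_sum, ← mul_assoc, h]
  refine Finset.sum_congr rfl fun k hk => ?_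
  have hk' : k ≤ n := Finset.mem_range_succ_iff.mp hk
  rw [evalP' n k hk', df_choose' n k hk', df_choose, ← cff n k hk']
  ring

lemma SA (n : ℕ) :
    ∑ k ∈ Finset.range (n + 1),
        (n.choose k : ℚ) ^ 2 * ((H n - H (n - k)) * (H n - H k))
      = (((2 * n).choose n : ℕ) : ℚ)
          * ((H (2 * n) - H n) ^ 2 - (H2 (2 * n) - H2 n)) := by
  apply mul_left_cancel₀ (fact_ne n)
  have h := key3 n
  rw [evalP'' (2 * n) n (by omega)] at h
  have hs : 2 * n - n = n := by omega
  rw [hs, Nat.descFactorial_eq_factorial_mul_choose] at h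
  push_cast at h
  rw [Finset.mul_sum, ← mul_assoc, h]
  refine Finset.sum_congr rfl fun k hk => ?_
  have hk' : k ≤ n := Finset.mem_range_succ_iff.mp hk
  have hnk : n - k ≤ n := by omega
  have hkk : n - (n - k) = k := by omega
  rw [evalP' n k hk', evalP' n (n - k) hnk, hkk, df_choose' n k hk', df_choose,
    ← cff n k hk']
  ring

theorem stmt15 (n : ℕ) (hn : 1 ≤ n) :
    ∑ k ∈ Finset.Icc 1 n, (n.choose k : ℚ)^2 * k * H k * H (n - k)
      = (n : ℚ) / 2 * ((2 * n).choose n : ℚ)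
          * ((H2 n - H2 (2 * n - 1))
            + (2 * H n - H (2 * n - 1)) * (2 * H n - H (2 * n - 1) - 1 / n)) := by
  set CB : ℚ := (((2 * n).choose n : ℕ) : ℚ) with hCB
  -- reflection on plain H sum
  have R0 : ∑ k ∈ Finset.range (n + 1), (n.choose k : ℚ) ^ 2 * H k
      = ∑ k ∈ Finset.range (n + 1), (n.choose k : ℚ) ^ 2 * H (n - k) := by
    rw [← Finset.sum_range_reflect (fun k => (n.choose k : ℚ) ^ 2 * H (n - k)) (n + 1)]
    refine Finset.sum_congr rfl fun k hk => ?_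
    have hk' : k ≤ n := Finset.mem_range_succ_iff.mp hk
    have h1 : n + 1 - 1 - k = n - k := by omega
    have h2 : n - (n - k) = k := by omega
    rw [h1, h2, Nat.choose_symm hk']
  -- value of ∑ c² H(n-k)
  have hS1' : ∑ k ∈ Finset.range (n + 1), (n.choose k : ℚ) ^ 2 * H (n - k)
      = CB * (2 * H n - H (2 * n)) := by
    have e1 : ∑ k ∈ Finset.range (n + 1),
        ((H n) * (n.choose k : ℚ) ^ 2 - (n.choose k : ℚ) ^ 2 * H (n - k))
        = CB * (H (2 * n) - H n) := by
      rw [← SB n]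
      exact Finset.sum_congr rfl fun k _ => by ring
    rw [Finset.sum_sub_distrib, ← Finset.mul_sum, SC n] at e1
    linarith [e1]
  -- value of central double-harmonic sum
  have hSH : ∑ k ∈ Finset.range (n + 1), (n.choose k : ℚ) ^ 2 * (H k * H (n - k))
      = CB * ((H (2 * n) - H n) ^ 2 - (H2 (2 * n) - H2 n))
          - (H n) ^ 2 * CB + 2 * (H n) * (CB * (2 * H n - H (2 * n))) := by
    have e3 : ∑ k ∈ Finset.range (n + 1),
        ((H n) ^ 2 * (n.choose k : ℚ) ^ 2
          - (H n) * ((n.choose k : ℚ) ^ 2 * H k)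
          - (H n) * ((n.choose k : ℚ) ^ 2 * H (n - k))
          + (n.choose k : ℚ) ^ 2 * (H k * H (n - k)))
        = CB * ((H (2 * n) - H n) ^ 2 - (H2 (2 * n) - H2 n)) := by
      rw [← SA n]
      exact Finset.sum_congr rfl fun k _ => by ring
    rw [Finset.sum_add_distrib, Finset.sum_sub_distrib, Finset.sum_sub_distrib,
      ← Finset.mul_sum, ← Finset.mul_sum, ← Finset.mul_sum, SC n, R0, hS1'] at e3
    linarith [e3]
  -- weighted symmetry
  have hT : 2 * ∑ k ∈ Finset.range (n + 1), (n.choose k : ℚ) ^ 2 * k * H k * H (n - k)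
      = (n : ℚ) * ∑ k ∈ Finset.range (n + 1), (n.choose k : ℚ) ^ 2 * (H k * H (n - k)) := by
    have hrefl : ∑ k ∈ Finset.range (n + 1), (n.choose k : ℚ) ^ 2 * k * H k * H (n - k)
        = ∑ k ∈ Finset.range (n + 1),
            (n.choose k : ℚ) ^ 2 * ((n - k : ℕ) : ℚ) * H (n - k) * H k := by
      rw [← Finset.sum_range_reflect
        (fun k => (n.choose k : ℚ) ^ 2 * k * H k * H (n - k)) (n + 1)]
      refine Finset.sum_congr rfl fun k hk => ?_
      have hk' : k ≤ n := Finset.mem_range_succ_iff.mp hk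
      have h1 : n + 1 - 1 - k = n - k := by omega
      have h2 : n - (n - k) = k := by omega
      rw [h1, h2, Nat.choose_symm hk']
    rw [two_mul]
    nth_rewrite 2 [hrefl]
    rw [← Finset.sum_add_distrib, Finset.mul_sum]
    refine Finset.sum_congr rfl fun k hk => ?_
    have hk' : k ≤ n := Finset.mem_range_succ_iff.mp hk
    have hc : ((n - k : ℕ) : ℚ) = (n : ℚ) - k := by
      push_cast [Nat.cast_sub hk']; ring
    rw [hc]; ring
  -- Icc sum equals range sum
  have hIcc : ∑ k ∈ Finset.Icc 1 n, (n.choose k : ℚ)^2 * k * H k * H (n - k)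
      = ∑ k ∈ Finset.range (n + 1), (n.choose k : ℚ) ^ 2 * k * H k * H (n - k) := by
    apply Finset.sum_subset
    · intro x hx
      simp only [Finset.mem_Icc] at hx
      exact Finset.mem_range_succ_iff.mpr hx.2
    · intro x hx hnx
      simp only [Finset.mem_Icc] at hnx
      have hx' : x ≤ n := Finset.mem_range_succ_iff.mp hx
      have : x = 0 := by omega
      simp [this]
  -- relate H (2n), H2 (2n) to H (2n-1), H2 (2n-1)
  have h2n : 2 * n = (2 * n - 1) + 1 := by omega
  have hc2n : ((2 * n - 1 : ℕ) : ℚ) + 1 = 2 * (n : ℚ) := by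
    push_cast [Nat.cast_sub (by omega : 1 ≤ 2 * n)]; ring
  have hH2n : H (2 * n) = H (2 * n - 1) + 1 / (2 * (n : ℚ)) := by
    have h := H_succ (2 * n - 1)
    rw [hc2n, ← h2n] at h
    exact h
  have hH22n : H2 (2 * n) = H2 (2 * n - 1) + 1 / (2 * (n : ℚ)) ^ 2 := by
    have h := H2_succ (2 * n - 1)
    rw [hc2n, ← h2n] at h
    exact h
  have hnQ : (n : ℚ) ≠ 0 := by
    exact_mod_cast (by omega : n ≠ 0)
  rw [hIcc]
  have halg : CB * ((H (2 * n) - H n) ^ 2 - (H2 (2 * n) - H2 n))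
        - (H n) ^ 2 * CB + 2 * (H n) * (CB * (2 * H n - H (2 * n)))
      = CB * ((H2 n - H2 (2 * n - 1))
          + (2 * H n - H (2 * n - 1)) * (2 * H n - H (2 * n - 1) - 1 / n)) := by
    rw [hH2n, hH22n]
    field_simp
    ring
  have h2 : 2 * ∑ k ∈ Finset.range (n + 1), (n.choose k : ℚ) ^ 2 * k * H k * H (n - k)
      = (n : ℚ) * (CB * ((H2 n - H2 (2 * n - 1))
          + (2 * H n - H (2 * n - 1)) * (2 * H n - H (2 * n - 1) - 1 / n))) := by
    rw [hT, hSH, halg]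
  linear_combination h2 / 2
end

section
/- For all natural numbers n ≥ 1, the sum over k from 0 to n of (-1)^k·C(n,k)·H_k² equals (1/n)·(H_n - 2/n). -/
/-!
Let `T a n = ∑ₖ (-1)^k C(n,k) a k` be the binomial transform. Pascal's rule gives
`T a (n+1) = -T (Δa) n`, and `C(n,k)/(k+1) = C(n+1,k+1)/(n+1)` expresses `T (a (k+1)/(k+1)) n`
through `T a (n+1)`. Since `Δ(H²)ₖ = 2 H_{k+1}/(k+1) - 1/(k+1)²`, these two rules reduce the
claim to `T H (n+1) = -1/(n+1)` and `T (1/k) n = -H n`, both of which telescope.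
-/

open Finset BigOperators

section BinomialTransform

variable {R : Type*} [CommRing R]

def binomialTransform (a : ℕ → R) (n : ℕ) : R :=
  ∑ k ∈ range (n + 1), (-1) ^ k * (n.choose k : R) * a k

lemma binomialTransform_sub (a b : ℕ → R) (n : ℕ) :
    binomialTransform (fun k => a k - b k) n = binomialTransform a n - binomialTransform b n := by
  simp only [binomialTransform, mul_sub, sum_sub_distrib]

lemma binomialTransform_const_mul (c : R) (a : ℕ → R) (n : ℕ) :
    binomialTransform (fun k => c * a k) n = c * binomialTransform a n := by
  simp only [binomialTransform, mul_sum]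
  exact sum_congr rfl fun k _ => by ring

lemma binomialTransform_succ (a : ℕ → R) (n : ℕ) :
    binomialTransform a (n + 1) = -binomialTransform (fun k => a (k + 1) - a k) n := by
  have tail : ∑ k ∈ range (n + 1), (-1) ^ (k + 1) * (n.choose (k + 1) : R) * a (k + 1)
      = binomialTransform a n - a 0 := by
    rw [binomialTransform, sum_range_succ' (fun k => (-1) ^ k * (n.choose k : R) * a k),
      sum_range_succ]
    simp
  rw [binomialTransform, sum_range_succ', binomialTransform_sub]
  simp only [Nat.choose_succ_succ', Nat.cast_add, mul_add, add_mul, sum_add_distrib, tail]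
  simp only [binomialTransform, pow_succ, mul_neg_one, neg_mul, sum_neg_distrib, pow_zero,
    Nat.choose_zero_right, Nat.cast_one, one_mul]
  ring

lemma binomialTransform_const_succ (c : R) (n : ℕ) :
    binomialTransform (fun _ => c) (n + 1) = 0 := by
  rw [binomialTransform_succ]
  simp [binomialTransform]

end BinomialTransform

section Field

variable {K : Type*} [Field K] [CharZero K]

lemma binomialTransform_div_succ (a : ℕ → K) (n : ℕ) :
    binomialTransform (fun k => a (k + 1) / (k + 1)) n
      = (a 0 - binomialTransform a (n + 1)) / (n + 1) := by
  rw [eq_div_iff (Nat.cast_add_one_ne_zero n), binomialTransform, binomialTransform,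
    sum_range_succ' _ (n + 1), sum_mul]
  simp only [pow_zero, Nat.choose_zero_right, Nat.cast_one, one_mul, sub_add_cancel_right,
    ← sum_neg_distrib]
  refine sum_congr rfl fun k _ => ?_
  have pascal : ((n : K) + 1) * n.choose k = (n + 1).choose (k + 1) * ((k : K) + 1) := by
    exact_mod_cast Nat.add_one_mul_choose_eq n k
  have hk : (k : K) + 1 ≠ 0 := Nat.cast_add_one_ne_zero k
  field_simp
  linear_combination (-1) ^ k * a (k + 1) * pascal

lemma binomialTransform_inv_succ (n : ℕ) :
    binomialTransform (fun k => ((k : K) + 1)⁻¹) n = ((n : K) + 1)⁻¹ := by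
  have := binomialTransform_div_succ (fun _ => (1 : K)) n
  simp only [binomialTransform_const_succ, sub_zero, one_div] at this
  exact this

end Field

lemma H_succ_s17 (n : ℕ) : H (n + 1) = H n + ((n : ℚ) + 1)⁻¹ := by
  simp [H, sum_range_succ]

lemma binomialTransform_H_succ (n : ℕ) : binomialTransform H (n + 1) = -((n : ℚ) + 1)⁻¹ := by
  simp only [binomialTransform_succ, H_succ_s17, add_sub_cancel_left, binomialTransform_inv_succ]

-- The `k = 0` term vanishes because `(0 : ℚ)⁻¹ = 0`.
lemma binomialTransform_inv (n : ℕ) : binomialTransform (fun k => (k : ℚ)⁻¹) n = -H n := by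
  induction n with
  | zero => simp [binomialTransform, H]
  | succ n ih =>
    rw [binomialTransform_succ, binomialTransform_sub]
    push_cast
    rw [binomialTransform_inv_succ, ih, H_succ_s17]
    ring

lemma binomialTransform_inv_succ_sq (n : ℕ) :
    binomialTransform (fun k => ((k : ℚ) + 1)⁻¹ ^ 2) n = H (n + 1) / (n + 1) := by
  have := binomialTransform_div_succ (fun k => (k : ℚ)⁻¹) n
  simp only [Nat.cast_add, Nat.cast_one, CharP.cast_eq_zero, inv_zero, binomialTransform_inv]
    at this
  simpa only [sq, div_eq_mul_inv, sub_neg_eq_add, zero_add] using this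

lemma binomialTransform_H_div_succ (n : ℕ) :
    binomialTransform (fun k => H (k + 1) / (k + 1)) n = ((n : ℚ) + 1)⁻¹ ^ 2 := by
  rw [binomialTransform_div_succ, binomialTransform_H_succ]
  simp only [H, range_zero, sum_empty, zero_sub, neg_neg]
  field_simp

lemma binomialTransform_H_sq_succ (n : ℕ) :
    binomialTransform (fun k => H k ^ 2) (n + 1) = (H (n + 1) - 2 / (n + 1)) / (n + 1) := by
  have step : (fun k => H (k + 1) ^ 2 - H k ^ 2)
      = fun k => 2 * (H (k + 1) / (k + 1)) - ((k : ℚ) + 1)⁻¹ ^ 2 := by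
    funext k
    rw [H_succ_s17]
    field_simp
    ring
  rw [binomialTransform_succ, step, binomialTransform_sub, binomialTransform_const_mul,
    binomialTransform_H_div_succ, binomialTransform_inv_succ_sq]
  field_simp
  ring

theorem stmt17_general (n : ℕ) :
    ∑ k ∈ Finset.range (n + 1), (-1 : ℚ)^k * (n.choose k : ℚ) * H k^2
      = 1 / n * (H n - 2 / n) := by
  cases n with
  | zero => simp [H] -- both sides are `0`, the right one because `1 / 0 = 0`
  | succ n =>
    rw [← binomialTransform, binomialTransform_H_sq_succ]
    push_cast
    ring

theorem stmt17 (n : ℕ) (hn : 1 ≤ n) :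
    ∑ k ∈ Finset.range (n + 1), (-1 : ℚ)^k * (n.choose k : ℚ) * H k^2
      = 1 / n * (H n - 2 / n) :=
  stmt17_general n
end
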